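/- arXiv:2205.13772 — 5 statements merged into one kernel-verified Lean document; each statement's English description precedes it below -/
import Mathlib

section
/- Let R be a relation on ℤ satisfying the step condition. If b is chained to c (Relation.ReflTransGen R b c) and b < c, then for every d with b ≤ d < c the one-step relation R d (d+1) holds. (Lemma 3.4 of the paper: a chain from a lower state to a higher state must contain a monotone chain of single upward steps through every intermediate state.) -/
/-! Induct on the chain from its first step `a → a'`. If `a' ≤ d` the rest of the chain already
crosses `d`; otherwise `a ≤ d < a'`, and since a step moves by at most one, that first step is
exactly `d → d + 1`. -/

theorem eq_and_eq_add_one_of_rel {R : ℤ → ℤ → Prop} (hstep : ∀ b c : ℤ, R b c → |b - c| ≤ 1)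
    {a a' d : ℤ} (h : R a a') (had : a ≤ d) (hda' : d < a') : d = a ∧ a' = a + 1 := by
  have := abs_le.mp (hstep a a' h)
  omega

theorem step_up_of_chained_general {R : ℤ → ℤ → Prop}
    (hstep : ∀ b c : ℤ, R b c → |b - c| ≤ 1)
    {b c : ℤ} (hchain : Relation.ReflTransGen R b c) :
    ∀ d : ℤ, b ≤ d → d < c → R d (d + 1) := by
  induction hchain using Relation.ReflTransGen.head_induction_on with
  | refl => intro d hbd hdc; omega
  | @head a a' hstart _ ih =>
    intro d had hdc
    by_cases ha'd : a' ≤ d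
    · exact ih d ha'd hdc
    · obtain ⟨rfl, rfl⟩ := eq_and_eq_add_one_of_rel hstep hstart had (not_le.mp ha'd)
      exact hstart

/-- Lemma 3.4: a chain from a lower state to a higher state must contain a
monotone chain of single upward steps through every intermediate state. -/
theorem step_up_of_chained {R : ℤ → ℤ → Prop}
    (hstep : ∀ b c : ℤ, R b c → |b - c| ≤ 1)
    {b c : ℤ} (hchain : Relation.ReflTransGen R b c) (hbc : b < c) :
    ∀ d : ℤ, b ≤ d → d < c → R d (d + 1) :=
  step_up_of_chained_general hstep hchain
end

section
/- Let R be a relation on ℤ satisfying the step condition. If b ≤ c and b is chained to c (Relation.ReflTransGen R b c), then for every d with b ≤ d ≤ c, b is chained to d (Relation.ReflTransGen R b d). (Corollary 3.4.1 of the paper: a chain from b up to c passes through every intermediate state.) -/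
/-! A chain can only climb one state per round, so the first time it rises above `d - 1`
it lands exactly on `d`. -/

theorem Relation.ReflTransGen.of_le_of_le_of_step_le_add_one {R : ℤ → ℤ → Prop}
    (hstep : ∀ x y : ℤ, R x y → y ≤ x + 1) {b c : ℤ} (hchain : Relation.ReflTransGen R b c)
    {d : ℤ} (hbd : b ≤ d) (hdc : d ≤ c) : Relation.ReflTransGen R b d := by
  induction hchain generalizing d with
  | refl => rw [le_antisymm hdc hbd]
  | @tail x y hbx hxy ih =>
    rcases le_or_gt d x with hdx | hxd
    · exact ih hbd hdx
    · obtain rfl : d = y := by linarith [hstep x y hxy]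
      exact hbx.tail hxy

theorem chained_to_intermediate_general {R : ℤ → ℤ → Prop}
    (hstep : ∀ b c : ℤ, R b c → |b - c| ≤ 1)
    {b c : ℤ} (hchain : Relation.ReflTransGen R b c) :
    ∀ d : ℤ, b ≤ d → d ≤ c → Relation.ReflTransGen R b d := fun _ hbd hdc =>
  hchain.of_le_of_le_of_step_le_add_one
    (fun x y hxy => by linarith [neg_abs_le (x - y), hstep x y hxy])
    hbd hdc

/-- Corollary 3.4.1: a chain from b up to c passes through every intermediate state. -/
theorem chained_to_intermediate {R : ℤ → ℤ → Prop}
    (hstep : ∀ b c : ℤ, R b c → |b - c| ≤ 1)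
    {b c : ℤ} (hbc : b ≤ c) (hchain : Relation.ReflTransGen R b c) :
    ∀ d : ℤ, b ≤ d → d ≤ c → Relation.ReflTransGen R b d :=
  chained_to_intermediate_general hstep hchain
end

section
/- Let f : ℤ → ℤ satisfy the step condition |f x - x| ≤ 1 for all x. Then every periodic point of f has minimal period at most 2: if f^[k] s = s for some k ≥ 1, then f (f s) = s. (Part of Corollary 3.8 of the paper: because a single state switch changes the defector count by at most one, any cycle in the state-transition graph can contain at most two states.) -/
/-!
If `f s = s + 1` but `f (s + 1) ≠ s`, then `f (s + 1) ≥ s + 1`, and the step condition makes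
`[s + 1, ∞)` forward invariant: every point above `s + 1` moves down by at most one. The orbit of
`s` enters this half-line after one step and never comes back to `s`. The case `f s = s - 1` is
symmetric.
-/

open Set

section StepMap

variable (f : ℤ → ℤ) (hstep : ∀ x : ℤ, |f x - x| ≤ 1)
include hstep

theorem mapsTo_Ici_of_le_apply {a : ℤ} (ha : a ≤ f a) : MapsTo f (Ici a) (Ici a) := by
  intro x (hx : a ≤ x)
  rcases hx.eq_or_lt with rfl | hlt
  · exact ha
  · have := (abs_le.mp (hstep x)).1
    show a ≤ f x
    omega

theorem mapsTo_Iic_of_apply_le {a : ℤ} (ha : f a ≤ a) : MapsTo f (Iic a) (Iic a) := by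
  intro x (hx : x ≤ a)
  rcases hx.eq_or_lt with rfl | hlt
  · exact ha
  · have := (abs_le.mp (hstep x)).2
    show f x ≤ a
    omega

end StepMap

theorem iterate_mem_of_mapsTo {α : Type*} {f : α → α} {S : Set α} (hS : MapsTo f S S)
    {s : α} (hs : f s ∈ S) {k : ℕ} (hk : 1 ≤ k) : f^[k] s ∈ S := by
  obtain ⟨n, rfl⟩ := Nat.exists_eq_add_of_le' hk
  rw [Function.iterate_succ_apply]
  exact hS.iterate n hs

/-- Any periodic point of a step-condition map on ℤ has minimal period at most 2. -/
theorem periodic_point_period_le_two (f : ℤ → ℤ)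
    (hstep : ∀ x : ℤ, |f x - x| ≤ 1)
    {s : ℤ} {k : ℕ} (hk : 1 ≤ k) (hper : f^[k] s = s) :
    f (f s) = s := by
  by_contra hne
  have hs := abs_le.mp (hstep s)
  have hfs := abs_le.mp (hstep (f s))
  rcases lt_trichotomy (f s) s with hlt | heq | hgt
  · have hback : f^[k] s ∈ Iic (f s) :=
      iterate_mem_of_mapsTo (mapsTo_Iic_of_apply_le f hstep (by omega)) self_mem_Iic hk
    rw [hper, mem_Iic] at hback
    omega
  · exact hne (by rw [heq, heq])
  · have hback : f^[k] s ∈ Ici (f s) :=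
      iterate_mem_of_mapsTo (mapsTo_Ici_of_le_apply f hstep (by omega)) self_mem_Ici hk
    rw [hper, mem_Ici] at hback
    omega
end

section
/- Let f : ℤ → ℤ satisfy the step condition |f x - x| ≤ 1 for all x. Suppose e is an equilibrium (f e = e), b < e, and the orbit of b reaches e, i.e. f^[k] b = e for some k. Then f d = d + 1 for every d with b ≤ d < e. (The upward case of Lemma 3.9 of the paper: if a state leads upward to a higher equilibrium, every intermediate state leads one step upward, forming a monotone chain reaction.) -/
/-- Discrete intermediate value theorem for sequences with steps of size ≤ 1. -/
lemma ivt_step (g : ℕ → ℤ) (hg : ∀ n, |g (n + 1) - g n| ≤ 1) (c : ℤ) :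
    ∀ k, g 0 ≤ c → c ≤ g k → ∃ j ≤ k, g j = c := by
  intro k
  induction k with
  | zero => intro h1 h2; exact ⟨0, le_refl _, le_antisymm h1 h2⟩
  | succ n ih =>
    intro h1 h2
    by_cases h : c ≤ g n
    · obtain ⟨j, hj, hjc⟩ := ih h1 h
      exact ⟨j, Nat.le_succ_of_le hj, hjc⟩
    · have := hg n
      rw [abs_le] at this
      exact ⟨n + 1, le_refl _, by omega⟩

/-- If the orbit of x (with x below equilibrium e) reaches e, then f x = x + 1. -/
lemma chain_aux (f : ℤ → ℤ) (hstep : ∀ x : ℤ, |f x - x| ≤ 1) (e : ℤ) :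
    ∀ m : ℕ, ∀ x : ℤ, x < e → f^[m] x = e → f x = x + 1 := by
  intro m
  induction m using Nat.strong_induction_on with
  | _ m ih =>
    intro x hxe horb
    have hs := hstep x
    rw [abs_le] at hs
    have h3 : f x = x - 1 ∨ f x = x ∨ f x = x + 1 := by omega
    rcases h3 with h | h | h
    · -- f x = x - 1 : orbit must come back through x, contradiction via IH
      exfalso
      rcases Nat.eq_zero_or_pos m with hm | hm
      · subst hm; simp at horb; omega
      obtain ⟨m', rfl⟩ : ∃ m', m = m' + 1 := ⟨m - 1, by omega⟩
      rw [Function.iterate_succ_apply, h] at horb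
      -- horb : f^[m'] (x - 1) = e
      have hivt := ivt_step (fun n => f^[n] (x - 1))
        (fun n => by
          simp only [Function.iterate_succ_apply']
          exact hstep _) x m' (by show f^[0] (x-1) ≤ x; simp only [Function.iterate_zero_apply]; omega) (by show x ≤ f^[m'] (x-1); omega)
      obtain ⟨j, hj, hjx⟩ := hivt
      have hj0 : j ≠ 0 := by
        intro h0; subst h0; simp only [Function.iterate_zero_apply] at hjx; omega
      have hrem : f^[m' - j] x = e := by
        have : f^[m' - j] (f^[j] (x - 1)) = e := by
          rw [← Function.iterate_add_apply]
          have : m' - j + j = m' := by omega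
          rw [this]; exact horb
        rwa [hjx] at this
      have := ih (m' - j) (by omega) x hxe hrem
      omega
    · -- f x = x : fixed, never reaches e
      exfalso
      rw [Function.iterate_fixed h] at horb
      omega
    · exact h

/-- Upward case of Lemma 3.9: if a state's orbit reaches a higher equilibrium,
every intermediate state leads one step upward. -/
theorem monotone_chain_up (f : ℤ → ℤ)
    (hstep : ∀ x : ℤ, |f x - x| ≤ 1)
    {b e : ℤ} (heq : f e = e) (hbe : b < e)
    {k : ℕ} (horbit : f^[k] b = e) :
    ∀ d : ℤ, b ≤ d → d < e → f d = d + 1 := by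
  intro d hbd hde
  obtain ⟨j, hj, hjd⟩ := ivt_step (fun n => f^[n] b)
    (fun n => by simp only [Function.iterate_succ_apply']; exact hstep _)
    d k (by simpa using hbd) (by show d ≤ f^[k] b; rw [horbit]; omega)
  have hrem : f^[k - j] d = e := by
    have : f^[k - j] (f^[j] b) = e := by
      rw [← Function.iterate_add_apply]
      have : k - j + j = k := by omega
      rw [this]; exact horbit
    rwa [hjd] at this
  exact chain_aux f hstep e (k - j) d hde hrem
end

section
/- Let f : ℤ → ℤ satisfy the step condition |f x - x| ≤ 1 for all x. Suppose e is an equilibrium (f e = e), e < b, and the orbit of b reaches e, i.e. f^[k] b = e for some k. Then f d = d - 1 for every d with e < d ≤ b. (The downward case of the paper's monotone chain structure: if a state leads downward to a lower equilibrium, every intermediate state leads one step downward.) -/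
open Set

theorem Int.mapsTo_Ici_of_sub_one_le {f : ℤ → ℤ} (hdown : ∀ x, x - 1 ≤ f x) {d : ℤ}
    (hd : d ≤ f d) : MapsTo f (Ici d) (Ici d) := by
  intro x (hx : d ≤ x)
  rcases hx.eq_or_lt with rfl | hlt
  · exact hd
  · exact show d ≤ f x by linarith [hdown x]

theorem monotone_chain_down_general (f : ℤ → ℤ)
    (hstep : ∀ x : ℤ, |f x - x| ≤ 1)
    {b e : ℤ}
    {k : ℕ} (horbit : f^[k] b = e) :
    ∀ d : ℤ, e < d → d ≤ b → f d = d - 1 := by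
  intro d hed hdb
  by_contra hne
  have hdown : ∀ x, x - 1 ≤ f x := fun x => by linarith [(abs_le.mp (hstep x)).1]
  have hd : d ≤ f d := by have := abs_le.mp (hstep d); omega
  have hde : d ≤ e := horbit ▸ (Int.mapsTo_Ici_of_sub_one_le hdown hd).iterate k hdb
  omega

/-- Downward case: if a state's orbit reaches a lower equilibrium,
every intermediate state leads one step downward. -/
theorem monotone_chain_down (f : ℤ → ℤ)
    (hstep : ∀ x : ℤ, |f x - x| ≤ 1)
    {b e : ℤ} (heq : f e = e) (heb : e < b)
    {k : ℕ} (horbit : f^[k] b = e) :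
    ∀ d : ℤ, e < d → d ≤ b → f d = d - 1 :=
  monotone_chain_down_general f hstep horbit
end
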